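/- Consider the per-round convergence-time problem with the CPU frequencies eliminated via fₙ = τ·cₙ·Dₙ/l^c. If a feasible point (l^c, E, B, l^up) satisfies the rate constraint C1 with strict inequality for some user n₀, i.e., l_{n₀}ᵘᵖ·W·log₂(1 + g_{n₀}E_{n₀}/(l_{n₀}ᵘᵖ·W·N₀)) > d(B_{n₀} + 1) + m, then the point is not optimal: there exists 0 < l' < l_{n₀}ᵘᵖ such that replacing l_{n₀}ᵘᵖ by l' keeps the point feasible and strictly decreases the objective value l^c + ∑ₙ lₙᵘᵖ. Consequently, at any optimal solution every user transmits exactly Sₙ = d(Bₙ + 1) + m bits, i.e., C1 holds with equality for all n. -/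
import Mathlib


open Finset

/-- Constants of the per-round convergence-time problem for `N` users. -/
structure FLParams (N : ℕ) where
  /-- bandwidth `W` -/
  W : ℝ
  /-- noise power `N₀` -/
  N0 : ℝ
  /-- hardware constant `ζ` -/
  ζ : ℝ
  /-- number of local SGD steps `τ` -/
  τ : ℝ
  /-- model dimension `d` -/
  d : ℝ
  /-- header size `m` -/
  m : ℝ
  /-- quantization error tolerance `ε` -/
  ε : ℝ
  /-- channel gains `gₙ` -/
  g : Fin N → ℝ
  /-- energy budgets `Eₙᵐᵃˣ` -/
  Emax : Fin N → ℝ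
  /-- CPU cycles per sample `cₙ` -/
  c : Fin N → ℝ
  /-- mini-batch sizes `Dₙ` -/
  D : Fin N → ℝ
  /-- maximum CPU frequencies `fₙᵐᵃˣ` -/
  fmax : Fin N → ℝ
  /-- dataset weights `pₙ` -/
  p : Fin N → ℝ
  /-- quantization constants `δₙ` -/
  δ : Fin N → ℝ

/-- The standing assumptions on the constants. -/
def FLParams.Valid {N : ℕ} (P : FLParams N) : Prop :=
  0 < P.W ∧ 0 < P.N0 ∧ 0 < P.ζ ∧ 1 ≤ P.τ ∧ 1 ≤ P.d ∧ 0 ≤ P.m ∧ 0 < P.ε ∧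
  (∀ n, 0 < P.g n) ∧ (∀ n, 0 < P.Emax n) ∧ (∀ n, 0 < P.c n) ∧ (∀ n, 0 < P.D n) ∧
  (∀ n, 0 < P.fmax n) ∧ (∀ n, 0 ≤ P.p n) ∧ (∑ n, P.p n) = 1 ∧ (∀ n, 0 ≤ P.δ n)

/-- Feasibility of a point `(l^c, E, B, l^up)` for the per-round convergence-time problem with
the CPU frequencies eliminated via `fₙ = τ cₙ Dₙ / l^c`: `l^c ≥ a₁ = maxₙ τ cₙ Dₙ / fₙᵐᵃˣ`,
positivity, and constraints C1 (rate), C2 (energy, reading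
`ζ τ³ cₙ³ Dₙ³/(l^c)² + Eₙ ≤ Eₙᵐᵃˣ`), C3 (quantization error tolerance). -/
def Feasible2 {N : ℕ} (P : FLParams N) (lc : ℝ) (E B lup : Fin N → ℝ) : Prop :=
  0 < lc ∧ (∀ n, P.τ * P.c n * P.D n / P.fmax n ≤ lc) ∧
  (∀ n, 0 ≤ E n) ∧ (∀ n, 1 ≤ B n) ∧ (∀ n, 0 < lup n) ∧
  (∀ n, P.d * (B n + 1) + P.m ≤
    lup n * P.W * Real.logb 2 (1 + P.g n * E n / (lup n * P.W * P.N0))) ∧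
  (∀ n, P.ζ * P.τ ^ 3 * (P.c n) ^ 3 * (P.D n) ^ 3 / lc ^ 2 + E n ≤ P.Emax n) ∧
  (∑ n, P.p n * (P.δ n) ^ 2 / ((2 : ℝ) ^ (B n) - 1) ^ 2 ≤ P.ε)

/-- If a feasible point of the reduced per-round problem satisfies the rate constraint C1 with
strict inequality for some user `n₀`, then it is not optimal: there exists `0 < l' < l_{n₀}ᵘᵖ`
such that replacing `l_{n₀}ᵘᵖ` by `l'` keeps the point feasible and strictly decreases the
objective `l^c + ∑ₙ lₙᵘᵖ`. Consequently, at any optimal solution every user transmits exactly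
`Sₙ = d (Bₙ + 1) + m` bits, i.e. C1 holds with equality for all `n`. -/
theorem rate_constraint_tight_at_optimum {N : ℕ} (P : FLParams N) (hP : P.Valid) :
    (∀ lc E B lup, Feasible2 P lc E B lup → ∀ n0 : Fin N,
      P.d * (B n0 + 1) + P.m <
        lup n0 * P.W * Real.logb 2 (1 + P.g n0 * E n0 / (lup n0 * P.W * P.N0)) →
      ∃ l' : ℝ, 0 < l' ∧ l' < lup n0 ∧
        Feasible2 P lc E B (Function.update lup n0 l') ∧
        lc + ∑ n, Function.update lup n0 l' n < lc + ∑ n, lup n) ∧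
    (∀ lc E B lup, Feasible2 P lc E B lup →
      (∀ lc' E' B' lup', Feasible2 P lc' E' B' lup' →
        lc + ∑ n, lup n ≤ lc' + ∑ n, lup' n) →
      ∀ n, lup n * P.W * Real.logb 2 (1 + P.g n * E n / (lup n * P.W * P.N0)) =
        P.d * (B n + 1) + P.m) := by
  obtain ⟨hW, hN0, hζ, hτ, hd, hm, hε, hg, hEmax, hc, hD, hfmax, hp, hpsum, hδ⟩ := hP
  have key : ∀ lc E B lup, Feasible2 P lc E B lup → ∀ n0 : Fin N,
      P.d * (B n0 + 1) + P.m <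
        lup n0 * P.W * Real.logb 2 (1 + P.g n0 * E n0 / (lup n0 * P.W * P.N0)) →
      ∃ l' : ℝ, 0 < l' ∧ l' < lup n0 ∧
        Feasible2 P lc E B (Function.update lup n0 l') ∧
        lc + ∑ n, Function.update lup n0 l' n < lc + ∑ n, lup n := by
    intro lc E B lup hF n0 hlt
    obtain ⟨hlc, ha1, hE, hB, hlup, hC1, hC2, hC3⟩ := hF
    set A := P.g n0 * E n0 with hA
    have hA0 : 0 ≤ A := mul_nonneg (hg n0).le (hE n0)
    have hl0 : 0 < lup n0 := hlup n0
    set f : ℝ → ℝ := fun l => l * P.W * Real.logb 2 (1 + A / (l * P.W * P.N0)) with hf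
    have hcont : ContinuousAt f (lup n0) := by
      have hne : lup n0 * P.W * P.N0 ≠ 0 := by positivity
      have h1 : ContinuousAt (fun l : ℝ => 1 + A / (l * P.W * P.N0)) (lup n0) := by
        apply continuousAt_const.add
        exact continuousAt_const.div (by fun_prop) hne
      have harg : (1 : ℝ) + A / (lup n0 * P.W * P.N0) ≠ 0 := by
        have : 0 ≤ A / (lup n0 * P.W * P.N0) := by positivity
        linarith
      have h2 : ContinuousAt (fun l : ℝ => Real.logb 2 (1 + A / (l * P.W * P.N0))) (lup n0) :=
        ContinuousAt.comp (f := fun l : ℝ => 1 + A / (l * P.W * P.N0))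
          (Real.continuousAt_logb harg) h1
      exact (continuousAt_id.mul continuousAt_const).mul h2
    have hev : ∀ᶠ l in nhds (lup n0), P.d * (B n0 + 1) + P.m < f l :=
      hcont.eventually (lt_mem_nhds hlt)
    obtain ⟨δ, hδpos, hball⟩ := Metric.eventually_nhds_iff.mp hev
    set l' : ℝ := max (lup n0 - δ / 2) (lup n0 / 2) with hl'
    have hl'pos : 0 < l' := lt_max_of_lt_right (by linarith)
    have hl'lt : l' < lup n0 := max_lt (by linarith) (by linarith)
    have hl'near : dist l' (lup n0) < δ := by
      rw [Real.dist_eq, abs_sub_lt_iff]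
      constructor
      · linarith
      · have : lup n0 - δ / 2 ≤ l' := le_max_left _ _
        linarith
    have hfl' : P.d * (B n0 + 1) + P.m < f l' := hball hl'near
    refine ⟨l', hl'pos, hl'lt, ⟨hlc, ha1, hE, hB, ?_, ?_, hC2, hC3⟩, ?_⟩
    · intro n
      rcases eq_or_ne n n0 with rfl | hn
      · simpa using hl'pos
      · simpa [Function.update_of_ne hn] using hlup n
    · intro n
      rcases eq_or_ne n n0 with rfl | hn
      · simpa [Function.update_self] using hfl'.le
      · simpa [Function.update_of_ne hn] using hC1 n
    · have hsum : ∑ n, Function.update lup n0 l' n < ∑ n, lup n := by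
        apply Finset.sum_lt_sum
        · intro i _
          rcases eq_or_ne i n0 with rfl | hi
          · simpa using hl'lt.le
          · simp [Function.update_of_ne hi]
        · exact ⟨n0, Finset.mem_univ _, by simpa using hl'lt⟩
      linarith
  refine ⟨key, ?_⟩
  intro lc E B lup hF hopt n
  by_contra h
  have hlt : P.d * (B n + 1) + P.m <
      lup n * P.W * Real.logb 2 (1 + P.g n * E n / (lup n * P.W * P.N0)) :=
    (hF.2.2.2.2.2.1 n).lt_of_ne (Ne.symm h)
  obtain ⟨l', _, _, hfeas, hobj⟩ := key lc E B lup hF n hlt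
  exact absurd (hopt lc E B _ hfeas) (not_le.mpr hobj)
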